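/- Let T, L, P > 0, n ∈ ℕ with n ≥ 1, and let (h,t,ρ) be a discretization with t = Σ₊h, Σ_{j=1}^n h_j = T, and ρ_j = 2LP h_j² for all j ∈ [1,n]. Then E(h,t,ρ) ≤ e^{LT} ( ρ_0/2 + PT(2+LT)(e^{L‖h‖_∞} − 1) ), where ‖h‖_∞ is the maximal step-size. -/

import Mathlib

noncomputable section

/-- The local error term `𝓔_j(h,t,ρ)` of the Euler scheme error bound:
`𝓔_0 = e^{LT} ρ_0/2` and `𝓔_j = e^{L(T-t_j)}(e^{L h_j}-1)(P h_j + ρ_j/2 + ρ_j/(2 L h_j))`. -/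
def calE (T L P : ℝ) (h t ρ : ℕ → ℝ) (j : ℕ) : ℝ :=
  if j = 0 then Real.exp (L * T) * ρ 0 / 2
  else Real.exp (L * (T - t j)) * (Real.exp (L * h j) - 1) *
    (P * h j + ρ j / 2 + ρ j / (2 * L * h j))

/-- The error bound `E(h,t,ρ) = ∑_{j=0}^n 𝓔_j(h,t,ρ)` for a discretization of length `n`. -/
def Ebound (T L P : ℝ) (n : ℕ) (h t ρ : ℕ → ℝ) : ℝ :=
  ∑ j ∈ Finset.range (n + 1), calE T L P h t ρ j

/-- The `h`-component of the subdivision rule `ψ[h,t,ρ;k]`: for `k = 0` the step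
sizes are unchanged, for `k ∈ [1,n]` the entry `h_k` is replaced by the two
entries `h_k/2, h_k/2` and later entries are shifted. -/
def psiH (h : ℕ → ℝ) (k : ℕ) : ℕ → ℝ := fun j =>
  if k = 0 then h j
  else if j < k then h j
  else if j ≤ k + 1 then h k / 2
  else h (j - 1)

/-- The `t`-component of the subdivision rule `ψ[h,t,ρ;k]`: for `k = 0` the nodes
are unchanged, for `k ∈ [1,n]` the node `t_k - h_k/2` is inserted between
`t_{k-1}` and `t_k`. -/
def psiT (h t : ℕ → ℝ) (k : ℕ) : ℕ → ℝ := fun j =>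
  if k = 0 then t j
  else if j < k then t j
  else if j = k then t k - h k / 2
  else t (j - 1)

/-- The `ρ`-component of the subdivision rule `ψ[h,t,ρ;k]`: for `k = 0` the entry
`ρ_0` is replaced by `ρ_0/4`, for `k ∈ [1,n]` the entry `ρ_k` is replaced by the
two entries `ρ_k/4, ρ_k/4` and later entries are shifted. -/
def psiRho (ρ : ℕ → ℝ) (k : ℕ) : ℕ → ℝ := fun j =>
  if k = 0 then (if j = 0 then ρ 0 / 4 else ρ j)
  else if j < k then ρ j
  else if j ≤ k + 1 then ρ k / 4
  else ρ (j - 1)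

/-- The length of the discretization produced by `ψ[h,t,ρ;k]` from one of length `n`:
`n` if `k = 0`, and `n + 1` otherwise. -/
def newn (n k : ℕ) : ℕ := if k = 0 then n else n + 1

/-- `ΔE(h,t,ρ;k) = E(ψ[h,t,ρ;k]) - E(h,t,ρ)`. -/
def deltaE (T L P : ℝ) (n : ℕ) (h t ρ : ℕ → ℝ) (k : ℕ) : ℝ :=
  Ebound T L P (newn n k) (psiH h k) (psiT h t k) (psiRho ρ k) - Ebound T L P n h t ρ

/-- The cost estimator `C(h,t,ρ) = ∑_{j=0}^{n-1} (v_R(t_j)/ρ_j^{d_R}) ·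
(v_F(t_j) h_{j+1}^{d_F} / ρ_{j+1}^{d_F})`. -/
def costC (dR dF : ℕ) (vR vF : ℝ → ℝ) (n : ℕ) (h t ρ : ℕ → ℝ) : ℝ :=
  ∑ j ∈ Finset.range n,
    (vR (t j) / ρ j ^ dR) * (vF (t j) * h (j + 1) ^ dF / ρ (j + 1) ^ dF)

/-- `ΔC(h,t,ρ;k) = C(ψ[h,t,ρ;k]) - C(h,t,ρ)`. -/
def deltaC (dR dF : ℕ) (vR vF : ℝ → ℝ) (n : ℕ) (h t ρ : ℕ → ℝ) (k : ℕ) : ℝ :=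
  costC dR dF vR vF (newn n k) (psiH h k) (psiT h t k) (psiRho ρ k) -
    costC dR dF vR vF n h t ρ


/-!
Under the coupling `ρ_j = 2LP h_j²` the `j`-th local term collapses to
`e^{L(T-t_j)} (e^{L h_j} - 1) P h_j (2 + L h_j)`, which is at most
`e^{LT} (e^{L‖h‖_∞} - 1) P (2 + LT) h_j` since `0 ≤ t_j` and `h_j ≤ ‖h‖_∞, T`.
Summing over `j` and using `Σ h_j = T` gives the bound.
-/

open Finset

theorem Ebound_eq_calE_zero_add_sum (T L P : ℝ) (n : ℕ) (h t ρ : ℕ → ℝ) :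
    Ebound T L P n h t ρ = calE T L P h t ρ 0 + ∑ j ∈ Icc 1 n, calE T L P h t ρ j := by
  rw [Ebound, range_eq_Ico, sum_eq_sum_Ico_succ_bot n.add_one_pos, zero_add,
    Ico_add_one_right_eq_Icc]

theorem calE_of_rho_eq_coupling {T L P : ℝ} {h t ρ : ℕ → ℝ} {j : ℕ} (hj : j ≠ 0)
    (hL : L ≠ 0) (hhj : h j ≠ 0) (hρj : ρ j = 2 * L * P * h j ^ 2) :
    calE T L P h t ρ j =
      Real.exp (L * (T - t j)) * (Real.exp (L * h j) - 1) * (P * h j * (2 + L * h j)) := by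
  rw [calE, if_neg hj, hρj]
  field_simp
  ring

theorem calE_le_of_rho_eq_coupling {T L P M : ℝ} {h t ρ : ℕ → ℝ} {j : ℕ} (hj : j ≠ 0)
    (hL : 0 < L) (hP : 0 ≤ P) (hhj : 0 < h j) (hhM : h j ≤ M) (hhT : h j ≤ T)
    (htj : 0 ≤ t j) (hρj : ρ j = 2 * L * P * h j ^ 2) :
    calE T L P h t ρ j ≤
      Real.exp (L * T) * (P * (2 + L * T) * (Real.exp (L * M) - 1)) * h j := by
  rw [calE_of_rho_eq_coupling hj hL.ne' hhj.ne' hρj]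
  have hexp : 0 ≤ Real.exp (L * h j) - 1 := by
    linarith [Real.one_le_exp (mul_nonneg hL.le hhj.le)]
  have hexpM : 0 ≤ Real.exp (L * M) - 1 := by
    linarith [Real.exp_le_exp.mpr (mul_le_mul_of_nonneg_left hhM hL.le)]
  calc Real.exp (L * (T - t j)) * (Real.exp (L * h j) - 1) * (P * h j * (2 + L * h j))
      ≤ Real.exp (L * T) * (Real.exp (L * M) - 1) * (P * h j * (2 + L * T)) := by
        gcongr
        linarith
    _ = Real.exp (L * T) * (P * (2 + L * T) * (Real.exp (L * M) - 1)) * h j := by ring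

theorem le_csSup_of_mem_Icc {α : Type*} [ConditionallyCompleteLattice α] (h : ℕ → α)
    {n j : ℕ} (h1 : 1 ≤ j) (hn : j ≤ n) :
    h j ≤ sSup {x : α | ∃ j, 1 ≤ j ∧ j ≤ n ∧ x = h j} := by
  have hfin : {x : α | ∃ j, 1 ≤ j ∧ j ≤ n ∧ x = h j} = h '' Set.Icc 1 n := by
    ext x
    simp [eq_comm, and_assoc]
  rw [hfin]
  exact le_csSup ((Set.finite_Icc 1 n).image h).bddAbove ⟨j, ⟨h1, hn⟩, rfl⟩

theorem stmt_15_general (T L P : ℝ) (hL : 0 < L) (hP : 0 < P)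
    (n : ℕ) (h t ρ : ℕ → ℝ)
    (hh : ∀ j, 1 ≤ j → j ≤ n → 0 < h j)
    (htnn : ∀ j, j ≤ n → 0 ≤ t j)
    (hsum : ∑ j ∈ Finset.Icc 1 n, h j = T)
    (hcoup : ∀ j, 1 ≤ j → j ≤ n → ρ j = 2 * L * P * (h j) ^ 2) :
    Ebound T L P n h t ρ ≤
      Real.exp (L * T) * (ρ 0 / 2 +
        P * T * (2 + L * T) *
          (Real.exp (L * sSup {x : ℝ | ∃ j, 1 ≤ j ∧ j ≤ n ∧ x = h j}) - 1)) := by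
  set M := sSup {x : ℝ | ∃ j, 1 ≤ j ∧ j ≤ n ∧ x = h j}
  set C := Real.exp (L * T) * (P * (2 + L * T) * (Real.exp (L * M) - 1))
  have hhT : ∀ j ∈ Icc 1 n, h j ≤ T := fun j hj =>
    hsum ▸ single_le_sum (fun i hi => (hh i (mem_Icc.mp hi).1 (mem_Icc.mp hi).2).le) hj
  have hterms : ∑ j ∈ Icc 1 n, calE T L P h t ρ j ≤ C * T := calc
    ∑ j ∈ Icc 1 n, calE T L P h t ρ j ≤ ∑ j ∈ Icc 1 n, C * h j := by
      refine sum_le_sum fun j hj => ?_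
      obtain ⟨h1, h2⟩ := mem_Icc.mp hj
      exact calE_le_of_rho_eq_coupling (by omega) hL hP.le (hh j h1 h2)
        (le_csSup_of_mem_Icc h h1 h2) (hhT j hj) (htnn j h2) (hcoup j h1 h2)
    _ = C * T := by rw [← mul_sum, hsum]
  have hzero : calE T L P h t ρ 0 = Real.exp (L * T) * ρ 0 / 2 := if_pos rfl
  rw [Ebound_eq_calE_zero_add_sum, hzero]
  linarith

theorem stmt_15 (T L P : ℝ) (hT : 0 < T) (hL : 0 < L) (hP : 0 < P)
    (n : ℕ) (hn : 1 ≤ n) (h t ρ : ℕ → ℝ)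
    (hh : ∀ j, 1 ≤ j → j ≤ n → 0 < h j)
    (htnn : ∀ j, j ≤ n → 0 ≤ t j)
    (hρ : ∀ j, j ≤ n → 0 < ρ j)
    (hsum : ∑ j ∈ Finset.Icc 1 n, h j = T)
    (hcum : ∀ k, k ≤ n → t k = ∑ j ∈ Finset.Icc 1 k, h j)
    (hcoup : ∀ j, 1 ≤ j → j ≤ n → ρ j = 2 * L * P * (h j) ^ 2) :
    Ebound T L P n h t ρ ≤
      Real.exp (L * T) * (ρ 0 / 2 +
        P * T * (2 + L * T) *
          (Real.exp (L * sSup {x : ℝ | ∃ j, 1 ≤ j ∧ j ≤ n ∧ x = h j}) - 1)) :=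
  stmt_15_general T L P hL hP n h t ρ hh htnn hsum hcoup
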